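/- arXiv:1205.0281 — 4 statements merged into one kernel-verified Lean document; each statement's English description precedes it below -/
import Mathlib

section
/- Let σ > 0, P₁ > 0, P₂ > 0, α ∈ (0,1), and h₁₁, h₁₂, h₂₁, h₂₂ ∈ ℂ all nonzero. Define R₁(C₁,C₂) = log(1 + |h₁₁|²C₁/(σ² + |h₁₂|²C₂)) and R₂(C₁,C₂) = log(1 + |h₂₂|²C₂/(σ² + |h₂₁|²C₁)). Call (r, C₁, C₂) feasible if 0 ≤ C₁ ≤ P₁, 0 ≤ C₂ ≤ P₂, R₁(C₁,C₂) ≥ α r, and R₂(C₁,C₂) ≥ (1−α) r. Suppose (r*, C₁*, C₂*) is feasible and r ≤ r* for every feasible (r, C₁, C₂). Then R₁(C₁*, C₂*) = α r* and R₂(C₁*, C₂*) = (1−α) r*. -/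
/-!
If the first rate constraint were slack at an optimum, one could either raise `C₂` (if
`C₂ < P₂`) or lower `C₁` (if `C₂ = P₂`, where `C₁ > 0` because user 1 has positive rate) by
so little that user 1 stays strictly above `α r*`, while user 2's rate strictly increases.
With both constraints strict, `r*` can be raised, contradicting optimality. The second
constraint is the first one for the channel with the users swapped and `α` replaced by `1 - α`.
-/

open Filter Topology Set

/-- The rate of a user with own-link gain `a` and power `x`, under noise variance `σ²` and
interference of gain `b` and power `y`. -/
noncomputable def rate (σ a b x y : ℝ) : ℝ := Real.log (1 + a * x / (σ ^ 2 + b * y))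

section Rate

variable {σ a b : ℝ}

lemma rate_zero_left (σ a b y : ℝ) : rate σ a b 0 y = 0 := by
  simp [rate]

lemma strictMonoOn_rate_left (hσ : 0 < σ) (ha : 0 < a) (hb : 0 ≤ b) {y : ℝ} (hy : 0 ≤ y) :
    StrictMonoOn (fun x => rate σ a b x y) (Ici 0) := by
  intro x hx x' _ hxx'
  simp only [rate]
  have := mem_Ici.mp hx
  gcongr

lemma strictAntiOn_rate_right (hσ : 0 < σ) (ha : 0 < a) (hb : 0 < b) {x : ℝ} (hx : 0 < x) :
    StrictAntiOn (rate σ a b x) (Ici 0) := by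
  intro y hy y' hy' hyy'
  simp only [rate]
  have := mem_Ici.mp hy
  have := mem_Ici.mp hy'
  gcongr

lemma continuousAt_rate_left (hσ : 0 < σ) (ha : 0 ≤ a) (hb : 0 ≤ b) {x y : ℝ} (hx : 0 ≤ x)
    (hy : 0 ≤ y) : ContinuousAt (fun x => rate σ a b x y) x := by
  have hden : σ ^ 2 + b * y ≠ 0 := by positivity
  have harg : 1 + a * x / (σ ^ 2 + b * y) ≠ 0 := by positivity
  exact ((continuousAt_const.add ((continuousAt_const.mul continuousAt_id).div_const _))).log
    harg

lemma continuousAt_rate_right (hσ : 0 < σ) (ha : 0 ≤ a) (hb : 0 ≤ b) {x y : ℝ} (hx : 0 ≤ x)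
    (hy : 0 ≤ y) : ContinuousAt (rate σ a b x) y := by
  have hden : σ ^ 2 + b * y ≠ 0 := by positivity
  have harg : 1 + a * x / (σ ^ 2 + b * y) ≠ 0 := by positivity
  exact (continuousAt_const.add (continuousAt_const.div
    (continuousAt_const.add (continuousAt_const.mul continuousAt_id)) hden)).log harg

end Rate

lemma exists_mem_Ioo_lt_of_continuousAt_right {f : ℝ → ℝ} {x b c : ℝ} (hf : ContinuousAt f x)
    (hc : c < f x) (hxb : x < b) : ∃ t ∈ Ioo x b, c < f t :=
  (((hf.eventually (eventually_gt_nhds hc)).filter_mono nhdsWithin_le_nhds).and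
    (Ioo_mem_nhdsGT hxb)).exists.imp fun _ ht => ⟨ht.2, ht.1⟩

lemma exists_mem_Ioo_lt_of_continuousAt_left {f : ℝ → ℝ} {a x c : ℝ} (hf : ContinuousAt f x)
    (hc : c < f x) (hax : a < x) : ∃ t ∈ Ioo a x, c < f t :=
  (((hf.eventually (eventually_gt_nhds hc)).filter_mono nhdsWithin_le_nhds).and
    (Ioo_mem_nhdsLT hax)).exists.imp fun _ ht => ⟨ht.2, ht.1⟩

lemma exists_gt_of_mul_lt_of_one_sub_mul_lt {α r u v : ℝ} (hα : α ∈ Ioo (0 : ℝ) 1)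
    (hu : α * r < u) (hv : (1 - α) * r < v) : ∃ r' > r, α * r' ≤ u ∧ (1 - α) * r' ≤ v := by
  obtain ⟨hα0, hα1⟩ := hα
  have hα1' : 0 < 1 - α := sub_pos.mpr hα1
  refine ⟨min (u / α) (v / (1 - α)), lt_min ?_ ?_, ?_, ?_⟩
  · rwa [lt_div_iff₀ hα0, mul_comm]
  · rwa [lt_div_iff₀ hα1', mul_comm]
  · exact (le_div_iff₀' hα0).mp (min_le_left _ _)
  · exact (le_div_iff₀' hα1').mp (min_le_right _ _)

section RateProfile

variable (σ P₁ P₂ α A B C D : ℝ)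

/-- Feasibility in problem (P1-a). User 1 has own-link gain `A` and interference gain `B`,
user 2 has own-link gain `D` and interference gain `C`. -/
def RateProfileFeasible (r C₁ C₂ : ℝ) : Prop :=
  0 ≤ C₁ ∧ C₁ ≤ P₁ ∧ 0 ≤ C₂ ∧ C₂ ≤ P₂ ∧
    α * r ≤ rate σ A B C₁ C₂ ∧ (1 - α) * r ≤ rate σ D C C₂ C₁

variable {σ P₁ P₂ α A B C D}

lemma rateProfileFeasible_swap {r C₁ C₂ : ℝ} :
    RateProfileFeasible σ P₂ P₁ (1 - α) D C B A r C₂ C₁ ↔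
      RateProfileFeasible σ P₁ P₂ α A B C D r C₁ C₂ := by
  simp only [RateProfileFeasible, sub_sub_cancel]
  tauto

lemma exists_strict_of_rate_left_slack (hσ : 0 < σ) (hP₂ : 0 < P₂) (hA : 0 ≤ A) (hB : 0 ≤ B)
    (hC : 0 < C) (hD : 0 < D) {rs C₁ C₂ : ℝ} (hrs : 0 ≤ α * rs)
    (hfeas : RateProfileFeasible σ P₁ P₂ α A B C D rs C₁ C₂)
    (hslack : α * rs < rate σ A B C₁ C₂) :
    ∃ C₁' ∈ Icc 0 P₁, ∃ C₂' ∈ Icc 0 P₂,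
      α * rs < rate σ A B C₁' C₂' ∧ (1 - α) * rs < rate σ D C C₂' C₁' := by
  obtain ⟨hC₁0, hC₁P, hC₂0, hC₂P, -, hR₂⟩ := hfeas
  rcases hC₂P.lt_or_eq with hC₂P | rfl
  · obtain ⟨t, ⟨hC₂t, htP⟩, ht⟩ := exists_mem_Ioo_lt_of_continuousAt_right
      (continuousAt_rate_right hσ hA hB hC₁0 hC₂0) hslack hC₂P
    refine ⟨C₁, ⟨hC₁0, hC₁P⟩, t, ⟨hC₂0.trans hC₂t.le, htP.le⟩, ht, hR₂.trans_lt ?_⟩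
    exact strictMonoOn_rate_left hσ hD hC.le hC₁0 hC₂0 (hC₂0.trans hC₂t.le) hC₂t
  rcases hC₁0.eq_or_lt with rfl | hC₁pos
  · rw [rate_zero_left] at hslack
    exact (hrs.not_gt hslack).elim
  obtain ⟨t, ⟨ht0, htC₁⟩, ht⟩ := exists_mem_Ioo_lt_of_continuousAt_left
    (continuousAt_rate_left hσ hA hB hC₁0 hC₂0) hslack hC₁pos
  refine ⟨t, ⟨ht0.le, htC₁.le.trans hC₁P⟩, C₂, ⟨hC₂0, le_rfl⟩, ht, hR₂.trans_lt ?_⟩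
  exact strictAntiOn_rate_right hσ hD hC hP₂ ht0.le hC₁0 htC₁

lemma rate_left_eq_of_optimal (hσ : 0 < σ) (hP₁ : 0 ≤ P₁) (hP₂ : 0 < P₂)
    (hα : α ∈ Ioo (0 : ℝ) 1) (hA : 0 ≤ A) (hB : 0 ≤ B) (hC : 0 < C) (hD : 0 < D)
    {rs C₁ C₂ : ℝ} (hfeas : RateProfileFeasible σ P₁ P₂ α A B C D rs C₁ C₂)
    (hopt : ∀ r C₁ C₂, RateProfileFeasible σ P₁ P₂ α A B C D r C₁ C₂ → r ≤ rs) :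
    rate σ A B C₁ C₂ = α * rs := by
  have hrs : 0 ≤ rs := hopt 0 0 0
    ⟨le_rfl, hP₁, le_rfl, hP₂.le, by simp [rate_zero_left], by simp [rate_zero_left]⟩
  refine hfeas.2.2.2.2.1.antisymm' (not_lt.mp fun hslack => ?_)
  obtain ⟨C₁', hC₁', C₂', hC₂', h₁, h₂⟩ := exists_strict_of_rate_left_slack hσ hP₂ hA hB hC hD
    (mul_nonneg hα.1.le hrs) hfeas hslack
  obtain ⟨r', hr', hr'₁, hr'₂⟩ := exists_gt_of_mul_lt_of_one_sub_mul_lt hα h₁ h₂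
  exact (hopt r' C₁' C₂' ⟨hC₁'.1, hC₁'.2, hC₂'.1, hC₂'.2, hr'₁, hr'₂⟩).not_gt hr'

end RateProfile

/-- At any optimal solution of the proper Gaussian signaling rate-profile
problem (P1-a), both rate-profile constraints are active (equation (14) of the paper). -/
theorem stmt_7 (σ P₁ P₂ α : ℝ) (hσ : 0 < σ) (hP₁ : 0 < P₁) (hP₂ : 0 < P₂)
    (hα : α ∈ Set.Ioo (0 : ℝ) 1) (h₁₁ h₁₂ h₂₁ h₂₂ : ℂ)
    (hh₁₁ : h₁₁ ≠ 0) (hh₁₂ : h₁₂ ≠ 0) (hh₂₁ : h₂₁ ≠ 0) (hh₂₂ : h₂₂ ≠ 0)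
    (rs C₁s C₂s : ℝ)
    (hfeas : 0 ≤ C₁s ∧ C₁s ≤ P₁ ∧ 0 ≤ C₂s ∧ C₂s ≤ P₂ ∧
      Real.log (1 + ‖h₁₁‖ ^ 2 * C₁s / (σ ^ 2 + ‖h₁₂‖ ^ 2 * C₂s)) ≥ α * rs ∧
      Real.log (1 + ‖h₂₂‖ ^ 2 * C₂s / (σ ^ 2 + ‖h₂₁‖ ^ 2 * C₁s))
        ≥ (1 - α) * rs)
    (hopt : ∀ r C₁ C₂ : ℝ,
      (0 ≤ C₁ ∧ C₁ ≤ P₁ ∧ 0 ≤ C₂ ∧ C₂ ≤ P₂ ∧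
        Real.log (1 + ‖h₁₁‖ ^ 2 * C₁ / (σ ^ 2 + ‖h₁₂‖ ^ 2 * C₂)) ≥ α * r ∧
        Real.log (1 + ‖h₂₂‖ ^ 2 * C₂ / (σ ^ 2 + ‖h₂₁‖ ^ 2 * C₁))
          ≥ (1 - α) * r) → r ≤ rs) :
    Real.log (1 + ‖h₁₁‖ ^ 2 * C₁s / (σ ^ 2 + ‖h₁₂‖ ^ 2 * C₂s)) = α * rs ∧
    Real.log (1 + ‖h₂₂‖ ^ 2 * C₂s / (σ ^ 2 + ‖h₂₁‖ ^ 2 * C₁s))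
      = (1 - α) * rs := by
  have hA : 0 < ‖h₁₁‖ ^ 2 := by positivity
  have hB : 0 < ‖h₁₂‖ ^ 2 := by positivity
  have hC : 0 < ‖h₂₁‖ ^ 2 := by positivity
  have hD : 0 < ‖h₂₂‖ ^ 2 := by positivity
  have hα' : 1 - α ∈ Ioo (0 : ℝ) 1 := ⟨sub_pos.mpr hα.2, sub_lt_self 1 hα.1⟩
  exact ⟨rate_left_eq_of_optimal hσ hP₁.le hP₂ hα hA.le hB.le hC hD hfeas hopt,
    rate_left_eq_of_optimal hσ hP₂.le hP₁ hα' hD.le hC.le hB hA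
      (rateProfileFeasible_swap.mpr hfeas)
      fun r C₂ C₁ h => hopt r C₁ C₂ (rateProfileFeasible_swap.mp h)⟩
end

section
/- Let a₁, a₂ ≥ 0, b₁, b₂ ≥ 0, c₁, c₂ > 0 be real and h₁₁, h₁₂, h₂₁, h₂₂ ∈ ℂ. Suppose (X₁, X₂) ∈ ℂ² with (X₁, X₂) ≠ (0,0) satisfies a₁|h₁₁²X₁ + h₁₂²X₂|² + b₁ ≤ |X₂|², a₂|h₂₁²X₁ + h₂₂²X₂|² + b₂ ≤ |X₁|², |X₁| < c₁, and |X₂| < c₂. Then there exists (X₁', X₂') ∈ ℂ² satisfying all four constraints (with the non-strict bounds |X₁'| ≤ c₁, |X₂'| ≤ c₂) such that |X₁'| = c₁ or |X₂'| = c₂. -/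
/-!
Scaling a feasible point by a real factor `τ ≥ 1` multiplies both sides of each rate
constraint `a‖u‖² + b ≤ ‖v‖²` by `τ²` except the constant `b ≥ 0`, so feasibility is
preserved. Taking `τ = 1 / max (‖X₁‖ / c₁) (‖X₂‖ / c₂)` pushes the point out until one of
the modulus constraints becomes active.
-/

lemma mul_norm_smul_sq_add_le_norm_smul_sq {𝕜 E : Type*} [NormedField 𝕜]
    [SeminormedAddCommGroup E] [NormedSpace 𝕜 E] {a b : ℝ} {τ : 𝕜} {u v : E}
    (hb : 0 ≤ b) (hτ : 1 ≤ ‖τ‖) (h : a * ‖u‖ ^ 2 + b ≤ ‖v‖ ^ 2) :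
    a * ‖τ • u‖ ^ 2 + b ≤ ‖τ • v‖ ^ 2 := by
  have hτ_sq : 1 ≤ ‖τ‖ ^ 2 := one_le_pow₀ hτ
  rw [norm_smul, norm_smul, mul_pow, mul_pow]
  calc a * (‖τ‖ ^ 2 * ‖u‖ ^ 2) + b ≤ ‖τ‖ ^ 2 * (a * ‖u‖ ^ 2 + b) := by nlinarith
    _ ≤ ‖τ‖ ^ 2 * ‖v‖ ^ 2 := by gcongr

lemma exists_one_le_scale_eq_bound {x y c₁ c₂ : ℝ} (hxy : 0 < x ∨ 0 < y)
    (hc₁ : 0 < c₁) (hc₂ : 0 < c₂) (hx : x ≤ c₁) (hy : y ≤ c₂) :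
    ∃ τ : ℝ, 1 ≤ τ ∧ τ * x ≤ c₁ ∧ τ * y ≤ c₂ ∧ (τ * x = c₁ ∨ τ * y = c₂) := by
  set r := max (x / c₁) (y / c₂) with hr_def
  have hr : 0 < r := lt_max_iff.2 (hxy.imp (div_pos · hc₁) (div_pos · hc₂))
  have hr_le : r ≤ 1 := max_le ((div_le_one hc₁).2 hx) ((div_le_one hc₂).2 hy)
  have hx_le : x / c₁ ≤ r := le_max_left _ _
  have hy_le : y / c₂ ≤ r := le_max_right _ _
  refine ⟨r⁻¹, (one_le_inv₀ hr).2 hr_le, ?_, ?_, ?_⟩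
  · rw [inv_mul_le_iff₀ hr]
    rwa [div_le_iff₀ hc₁] at hx_le
  · rw [inv_mul_le_iff₀ hr]
    rwa [div_le_iff₀ hc₂] at hy_le
  · rcases max_choice (x / c₁) (y / c₂) with hmax | hmax <;> rw [← hr_def] at hmax
    · left
      have : x ≠ 0 := by rintro rfl; simp [hmax] at hr
      rw [hmax]; field_simp
    · right
      have : y ≠ 0 := by rintro rfl; simp [hmax] at hr
      rw [hmax]; field_simp

theorem stmt_11_general (a₁ a₂ b₁ b₂ c₁ c₂ : ℝ)
    (hb₁ : 0 ≤ b₁) (hb₂ : 0 ≤ b₂) (hc₁ : 0 < c₁) (hc₂ : 0 < c₂)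
    (h₁₁ h₁₂ h₂₁ h₂₂ : ℂ) (X₁ X₂ : ℂ) (hX : ¬(X₁ = 0 ∧ X₂ = 0))
    (h1 : a₁ * ‖h₁₁ ^ 2 * X₁ + h₁₂ ^ 2 * X₂‖ ^ 2 + b₁ ≤ ‖X₂‖ ^ 2)
    (h2 : a₂ * ‖h₂₁ ^ 2 * X₁ + h₂₂ ^ 2 * X₂‖ ^ 2 + b₂ ≤ ‖X₁‖ ^ 2)
    (h3 : ‖X₁‖ < c₁) (h4 : ‖X₂‖ < c₂) :
    ∃ X₁' X₂' : ℂ,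
      a₁ * ‖h₁₁ ^ 2 * X₁' + h₁₂ ^ 2 * X₂'‖ ^ 2 + b₁ ≤ ‖X₂'‖ ^ 2 ∧
      a₂ * ‖h₂₁ ^ 2 * X₁' + h₂₂ ^ 2 * X₂'‖ ^ 2 + b₂ ≤ ‖X₁'‖ ^ 2 ∧
      ‖X₁'‖ ≤ c₁ ∧ ‖X₂'‖ ≤ c₂ ∧
      (‖X₁'‖ = c₁ ∨ ‖X₂'‖ = c₂) := by
  have hX_pos : 0 < ‖X₁‖ ∨ 0 < ‖X₂‖ := by simpa only [norm_pos_iff, not_and_or] using hX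
  obtain ⟨τ, hτ, hτ₁, hτ₂, hτ_eq⟩ := exists_one_le_scale_eq_bound hX_pos hc₁ hc₂ h3.le h4.le
  have hτ_norm : 1 ≤ ‖τ‖ := by rwa [Real.norm_of_nonneg (by linarith)]
  have norm_smul_eq (X : ℂ) : ‖τ • X‖ = τ * ‖X‖ := norm_smul_of_nonneg (by linarith) X
  have smul_combination (p q : ℂ) : p * (τ • X₁) + q * (τ • X₂) = τ • (p * X₁ + q * X₂) := by
    simp only [mul_smul_comm, smul_add]
  refine ⟨τ • X₁, τ • X₂, ?_, ?_, ?_, ?_, ?_⟩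
  · rw [smul_combination]; exact mul_norm_smul_sq_add_le_norm_smul_sq hb₁ hτ_norm h1
  · rw [smul_combination]; exact mul_norm_smul_sq_add_le_norm_smul_sq hb₂ hτ_norm h2
  · rwa [norm_smul_eq]
  · rwa [norm_smul_eq]
  · rwa [norm_smul_eq, norm_smul_eq]

/-- Proposition 1 of the paper: any strictly interior nonzero feasible point
of (P1-b') can be scaled to a feasible point at which at least one modulus constraint is
active. -/
theorem stmt_11 (a₁ a₂ b₁ b₂ c₁ c₂ : ℝ) (ha₁ : 0 ≤ a₁) (ha₂ : 0 ≤ a₂)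
    (hb₁ : 0 ≤ b₁) (hb₂ : 0 ≤ b₂) (hc₁ : 0 < c₁) (hc₂ : 0 < c₂)
    (h₁₁ h₁₂ h₂₁ h₂₂ : ℂ) (X₁ X₂ : ℂ) (hX : ¬(X₁ = 0 ∧ X₂ = 0))
    (h1 : a₁ * ‖h₁₁ ^ 2 * X₁ + h₁₂ ^ 2 * X₂‖ ^ 2 + b₁ ≤ ‖X₂‖ ^ 2)
    (h2 : a₂ * ‖h₂₁ ^ 2 * X₁ + h₂₂ ^ 2 * X₂‖ ^ 2 + b₂ ≤ ‖X₁‖ ^ 2)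
    (h3 : ‖X₁‖ < c₁) (h4 : ‖X₂‖ < c₂) :
    ∃ X₁' X₂' : ℂ,
      a₁ * ‖h₁₁ ^ 2 * X₁' + h₁₂ ^ 2 * X₂'‖ ^ 2 + b₁ ≤ ‖X₂'‖ ^ 2 ∧
      a₂ * ‖h₂₁ ^ 2 * X₁' + h₂₂ ^ 2 * X₂'‖ ^ 2 + b₂ ≤ ‖X₁'‖ ^ 2 ∧
      ‖X₁'‖ ≤ c₁ ∧ ‖X₂'‖ ≤ c₂ ∧
      (‖X₁'‖ = c₁ ∨ ‖X₂'‖ = c₂) :=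
  stmt_11_general a₁ a₂ b₁ b₂ c₁ c₂ hb₁ hb₂ hc₁ hc₂ h₁₁ h₁₂ h₂₁ h₂₂ X₁ X₂ hX h1 h2 h3 h4
end

section
/- Let a₁, a₂ > 0, b₁, b₂ ≥ 0, c₁, c₂ > 0 be real and h₁₁, h₁₂, h₂₁, h₂₂ ∈ ℂ all nonzero with phases φ_{rt} = arg h_{rt}. Say (X₁, X₂) ∈ ℂ² is feasible if a₁|h₁₁²X₁ + h₁₂²X₂|² + b₁ ≤ |X₂|², a₂|h₂₁²X₁ + h₂₂²X₂|² + b₂ ≤ |X₁|², |X₁| ≤ c₁, and |X₂| ≤ c₂. If some feasible pair exists, then there exists a feasible pair (X₁, X₂) with X₁ real and X₁ ≥ 0 such that at least one of the following holds: (i) X₁ = 0 or X₂ = 0; (ii) X₂ = |X₂| e^{iθ} with θ = π + 2(φ₁₁ − φ₁₂) modulo 2π; (iii) X₂ = |X₂| e^{iθ} with θ = π + 2(φ₂₁ − φ₂₂) modulo 2π; (iv) X₁ = c₁ and both of the first two constraints hold with equality; (v) |X₂| = c₂ and both of the first two constraints hold with equality. -/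
/-!
Rotating a feasible pair so that `X₁ ≥ 0`, then scaling it by the largest factor `t ≥ 1` that the
modulus bounds allow, keeps it feasible (the constants `b₁, b₂ ≥ 0` only gain) and makes
`|X₁| = c₁` or `|X₂| = c₂`. Freeze that modulus and let the other one, `r`, vary together with the
phase `s` of `X₂`. By the law of cosines each quadratic constraint becomes
`G(r) ≤ H(r) cos (s - α)`, where `α` is the candidate phase and `H(r) > 0` for `r > 0`.
Take a feasible point with `r` minimal. If both constraints are strict there, `r` can be
decreased. If one is strict and the other tight with `cos (s - α) < 1`, a small change of `s` makes
both strict, because `cos` has no local maximum below `1`. So at the minimum the phase is a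
candidate or both constraints are tight.
-/

open Real Filter Topology Set

lemma not_isLocalMax_cos_sub {Δ s : ℝ} (hs : cos (s - Δ) < 1) :
    ¬ IsLocalMax (fun y => cos (y - Δ)) s := by
  intro hmax
  have hsin : sin (s - Δ) = 0 := by
    simpa using hmax.hasDerivAt_eq_zero ((hasDerivAt_cos _).comp_sub_const s Δ)
  have hcos : cos (s - Δ) = -1 := by nlinarith [sin_sq_add_cos_sq (s - Δ)]
  -- at a local maximum of value `-1`, `cos` is constant, so `sin` vanishes nearby
  have hsin_max : IsLocalMax (fun y => sin (y - Δ)) s := by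
    filter_upwards [hmax] with y hy
    nlinarith [sin_sq_add_cos_sq (y - Δ), neg_one_le_cos (y - Δ)]
  have := hsin_max.hasDerivAt_eq_zero ((hasDerivAt_sin _).comp_sub_const s Δ)
  linarith

lemma frequently_lt_mul_cos_sub {G H Δ s : ℝ} (hH : 0 < H) (hG : G = H * cos (s - Δ))
    (hs : cos (s - Δ) < 1) : ∃ᶠ y in 𝓝 s, G < H * cos (y - Δ) := by
  have := Filter.not_eventually.1 (not_isLocalMax_cos_sub hs)
  refine this.mono fun y hy => ?_
  rw [hG]
  exact mul_lt_mul_of_pos_left (not_le.1 hy) hH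

lemma eventually_lt_mul_cos_sub {G H Δ s : ℝ} (hG : G < H * cos (s - Δ)) :
    ∀ᶠ y in 𝓝 s, G < H * cos (y - Δ) :=
  ((by fun_prop : Continuous fun y => H * cos (y - Δ)).tendsto s).eventually_const_lt hG

lemma exists_mem_Icc_cos_sub_eq (s : ℝ) :
    ∃ s' ∈ Icc 0 (2 * π), ∀ Δ, cos (s' - Δ) = cos (s - Δ) := by
  refine ⟨toIcoMod two_pi_pos 0 s, ?_, fun Δ => ?_⟩
  · have := toIcoMod_mem_Ico two_pi_pos 0 s
    rw [zero_add] at this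
    exact Ico_subset_Icc_self this
  · rw [← self_sub_toIcoDiv_zsmul, sub_right_comm]
    exact cos_periodic.sub_zsmul_eq _

section PhaseConstraints

variable {c Δ₁ Δ₂ : ℝ} {G₁ G₂ H₁ H₂ : ℝ → ℝ}

lemma exists_feasible_radius_min (hG₁ : Continuous G₁) (hG₂ : Continuous G₂)
    (hH₁ : Continuous H₁) (hH₂ : Continuous H₂)
    (hfeas : ∃ r ∈ Icc 0 c, ∃ s, G₁ r ≤ H₁ r * cos (s - Δ₁) ∧ G₂ r ≤ H₂ r * cos (s - Δ₂)) :
    ∃ r ∈ Icc 0 c, ∃ s, (G₁ r ≤ H₁ r * cos (s - Δ₁) ∧ G₂ r ≤ H₂ r * cos (s - Δ₂)) ∧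
      ∀ r' ∈ Icc 0 c, ∀ s', G₁ r' ≤ H₁ r' * cos (s' - Δ₁) → G₂ r' ≤ H₂ r' * cos (s' - Δ₂) →
        r ≤ r' := by
  set F : Set (ℝ × ℝ) := (Icc 0 c ×ˢ Icc 0 (2 * π)) ∩
    ({p | G₁ p.1 ≤ H₁ p.1 * cos (p.2 - Δ₁)} ∩ {p | G₂ p.1 ≤ H₂ p.1 * cos (p.2 - Δ₂)})
  have hF : IsCompact F := (isCompact_Icc.prod isCompact_Icc).inter_right <|
    (isClosed_le (by fun_prop) (by fun_prop)).inter (isClosed_le (by fun_prop) (by fun_prop))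
  have hrep : ∀ r ∈ Icc 0 c, ∀ s, G₁ r ≤ H₁ r * cos (s - Δ₁) → G₂ r ≤ H₂ r * cos (s - Δ₂) →
      ∃ s', (r, s') ∈ F := by
    intro r hr s h₁ h₂
    obtain ⟨s', hs', hcos⟩ := exists_mem_Icc_cos_sub_eq s
    exact ⟨s', ⟨hr, hs'⟩, by simpa only [mem_ofPred_eq, hcos] using h₁,
      by simpa only [mem_ofPred_eq, hcos] using h₂⟩
  obtain ⟨r₀, hr₀, s₀, h₁, h₂⟩ := hfeas
  obtain ⟨s₀', hs₀'⟩ := hrep r₀ hr₀ s₀ h₁ h₂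
  obtain ⟨⟨r, s⟩, ⟨⟨hr, -⟩, hfs⟩, hmin⟩ :=
    hF.exists_isMinOn ⟨_, hs₀'⟩ continuous_fst.continuousOn
  refine ⟨r, hr, s, hfs, fun r' hr' s' h₁' h₂' => ?_⟩
  obtain ⟨s'', hs''⟩ := hrep r' hr' s' h₁' h₂'
  exact hmin hs''

lemma exists_feasible_lt_of_strict (hG₁ : Continuous G₁) (hG₂ : Continuous G₂)
    (hH₁ : Continuous H₁) (hH₂ : Continuous H₂) {r s : ℝ} (hr : 0 < r)
    (h₁ : G₁ r < H₁ r * cos (s - Δ₁)) (h₂ : G₂ r < H₂ r * cos (s - Δ₂)) :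
    ∃ r' ∈ Ioo 0 r, G₁ r' ≤ H₁ r' * cos (s - Δ₁) ∧ G₂ r' ≤ H₂ r' * cos (s - Δ₂) := by
  have hstrict : ∀ᶠ r' in 𝓝 r, G₁ r' < H₁ r' * cos (s - Δ₁) ∧ G₂ r' < H₂ r' * cos (s - Δ₂) :=
    (hG₁.continuousAt.eventually_lt (by fun_prop) h₁).and
      (hG₂.continuousAt.eventually_lt (by fun_prop) h₂)
  obtain ⟨r', ⟨h₁', h₂'⟩, hr'⟩ :=
    ((eventually_nhdsWithin_of_eventually_nhds hstrict).and (Ioo_mem_nhdsLT hr)).exists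
  exact ⟨r', hr', h₁'.le, h₂'.le⟩

theorem exists_feasible_extremal_phase (hG₁ : Continuous G₁) (hG₂ : Continuous G₂)
    (hH₁ : Continuous H₁) (hH₂ : Continuous H₂)
    (hH₁_pos : ∀ r, 0 < r → 0 < H₁ r) (hH₂_pos : ∀ r, 0 < r → 0 < H₂ r)
    (h_zero : ∀ s, ¬ (G₁ 0 ≤ H₁ 0 * cos (s - Δ₁) ∧ G₂ 0 ≤ H₂ 0 * cos (s - Δ₂)))
    (hfeas : ∃ r ∈ Icc 0 c, ∃ s, G₁ r ≤ H₁ r * cos (s - Δ₁) ∧ G₂ r ≤ H₂ r * cos (s - Δ₂)) :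
    ∃ r ∈ Icc 0 c, ∃ s, (G₁ r ≤ H₁ r * cos (s - Δ₁) ∧ G₂ r ≤ H₂ r * cos (s - Δ₂)) ∧
      (cos (s - Δ₁) = 1 ∨ cos (s - Δ₂) = 1 ∨
        (G₁ r = H₁ r * cos (s - Δ₁) ∧ G₂ r = H₂ r * cos (s - Δ₂))) := by
  obtain ⟨r, hr, s, hfs, hmin⟩ := exists_feasible_radius_min hG₁ hG₂ hH₁ hH₂ hfeas
  have hr₀ : 0 < r := hr.1.lt_of_ne <| by rintro rfl; exact h_zero s hfs
  have no_strict : ∀ s', ¬ (G₁ r < H₁ r * cos (s' - Δ₁) ∧ G₂ r < H₂ r * cos (s' - Δ₂)) := by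
    rintro s' ⟨h₁, h₂⟩
    obtain ⟨r', hr', h₁', h₂'⟩ := exists_feasible_lt_of_strict hG₁ hG₂ hH₁ hH₂ hr₀ h₁ h₂
    exact (hmin r' ⟨hr'.1.le, hr'.2.le.trans hr.2⟩ s' h₁' h₂').not_gt hr'.2
  refine ⟨r, hr, s, hfs, ?_⟩
  by_contra! hcon
  obtain ⟨hc₁, hc₂, hne⟩ := hcon
  rcases hfs.1.lt_or_eq with h₁ | h₁ <;> rcases hfs.2.lt_or_eq with h₂ | h₂
  · exact no_strict s ⟨h₁, h₂⟩
  · obtain ⟨s', h₂', h₁'⟩ := ((frequently_lt_mul_cos_sub (hH₂_pos r hr₀) h₂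
      ((cos_le_one _).lt_of_ne hc₂)).and_eventually (eventually_lt_mul_cos_sub h₁)).exists
    exact no_strict s' ⟨h₁', h₂'⟩
  · obtain ⟨s', h₁', h₂'⟩ := ((frequently_lt_mul_cos_sub (hH₁_pos r hr₀) h₁
      ((cos_le_one _).lt_of_ne hc₁)).and_eventually (eventually_lt_mul_cos_sub h₂)).exists
    exact no_strict s' ⟨h₁', h₂'⟩
  · exact hne h₁ h₂

end PhaseConstraints

theorem exists_polar_extremal {a₁ a₂ b₁ b₂ c₁ c₂ P₁ Q₁ P₂ Q₂ α₁ α₂ : ℝ}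
    (ha₁ : 0 < a₁) (ha₂ : 0 < a₂) (hb₁ : 0 ≤ b₁) (hb₂ : 0 ≤ b₂) (hc₁ : 0 < c₁) (hc₂ : 0 < c₂)
    (hP₁ : 0 < P₁) (hQ₁ : 0 < Q₁) (hP₂ : 0 < P₂) (hQ₂ : 0 < Q₂) {u₀ v₀ s₀ : ℝ}
    (hu₀ : u₀ ∈ Icc 0 c₁) (hv₀ : v₀ ∈ Icc 0 c₂) (hbd : u₀ = c₁ ∨ v₀ = c₂)
    (h₁ : a₁ * ((P₁ * u₀) ^ 2 + (Q₁ * v₀) ^ 2 - 2 * (P₁ * u₀) * (Q₁ * v₀) * cos (s₀ - α₁))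
      + b₁ ≤ v₀ ^ 2)
    (h₂ : a₂ * ((P₂ * u₀) ^ 2 + (Q₂ * v₀) ^ 2 - 2 * (P₂ * u₀) * (Q₂ * v₀) * cos (s₀ - α₂))
      + b₂ ≤ u₀ ^ 2) :
    ∃ u ∈ Icc 0 c₁, ∃ v ∈ Icc 0 c₂, ∃ s,
      (a₁ * ((P₁ * u) ^ 2 + (Q₁ * v) ^ 2 - 2 * (P₁ * u) * (Q₁ * v) * cos (s - α₁)) + b₁ ≤ v ^ 2 ∧
        a₂ * ((P₂ * u) ^ 2 + (Q₂ * v) ^ 2 - 2 * (P₂ * u) * (Q₂ * v) * cos (s - α₂)) + b₂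
          ≤ u ^ 2) ∧
      (cos (s - α₁) = 1 ∨ cos (s - α₂) = 1 ∨ ((u = c₁ ∨ v = c₂) ∧
        a₁ * ((P₁ * u) ^ 2 + (Q₁ * v) ^ 2 - 2 * (P₁ * u) * (Q₁ * v) * cos (s - α₁)) + b₁ = v ^ 2 ∧
        a₂ * ((P₂ * u) ^ 2 + (Q₂ * v) ^ 2 - 2 * (P₂ * u) * (Q₂ * v) * cos (s - α₂)) + b₂
          = u ^ 2)) := by
  rcases hbd with rfl | rfl
  · obtain ⟨v, hv, s, ⟨h₁, h₂⟩, hext⟩ := exists_feasible_extremal_phase (Δ₁ := α₁) (Δ₂ := α₂)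
      (G₁ := fun v => a₁ * ((P₁ * u₀) ^ 2 + (Q₁ * v) ^ 2) + b₁ - v ^ 2)
      (H₁ := fun v => 2 * a₁ * (P₁ * u₀) * (Q₁ * v))
      (G₂ := fun v => a₂ * ((P₂ * u₀) ^ 2 + (Q₂ * v) ^ 2) + b₂ - u₀ ^ 2)
      (H₂ := fun v => 2 * a₂ * (P₂ * u₀) * (Q₂ * v))
      (by fun_prop) (by fun_prop) (by fun_prop) (by fun_prop)
      (fun v hv => by positivity) (fun v hv => by positivity)
      (fun s h => absurd h.1 (by norm_num; positivity))
      ⟨v₀, hv₀, s₀, by linarith, by linarith⟩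
    refine ⟨u₀, hu₀, v, hv, s, ⟨by linarith, by linarith⟩, ?_⟩
    rcases hext with h | h | ⟨e₁, e₂⟩
    exacts [.inl h, .inr (.inl h), .inr (.inr ⟨.inl rfl, by linarith, by linarith⟩)]
  · obtain ⟨u, hu, s, ⟨h₁, h₂⟩, hext⟩ := exists_feasible_extremal_phase (Δ₁ := α₁) (Δ₂ := α₂)
      (G₁ := fun u => a₁ * ((P₁ * u) ^ 2 + (Q₁ * v₀) ^ 2) + b₁ - v₀ ^ 2)
      (H₁ := fun u => 2 * a₁ * (P₁ * u) * (Q₁ * v₀))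
      (G₂ := fun u => a₂ * ((P₂ * u) ^ 2 + (Q₂ * v₀) ^ 2) + b₂ - u ^ 2)
      (H₂ := fun u => 2 * a₂ * (P₂ * u) * (Q₂ * v₀))
      (by fun_prop) (by fun_prop) (by fun_prop) (by fun_prop)
      (fun u hu => by positivity) (fun u hu => by positivity)
      (fun s h => absurd h.2 (by norm_num; positivity))
      ⟨u₀, hu₀, s₀, by linarith, by linarith⟩
    refine ⟨u, hu, v₀, hv₀, s, ⟨by linarith, by linarith⟩, ?_⟩
    rcases hext with h | h | ⟨e₁, e₂⟩
    exacts [.inl h, .inr (.inl h), .inr (.inr ⟨.inr rfl, by linarith, by linarith⟩)]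

lemma norm_sq_ofReal_add_mul_exp (A B φ : ℝ) :
    ‖(A : ℂ) + B * Complex.exp (φ * Complex.I)‖ ^ 2 = A ^ 2 + B ^ 2 + 2 * A * B * cos φ := by
  rw [Complex.sq_norm, Complex.normSq_apply]
  simp only [Complex.add_re, Complex.add_im, Complex.mul_re, Complex.mul_im,
    Complex.ofReal_re, Complex.ofReal_im, Complex.exp_ofReal_mul_I_re,
    Complex.exp_ofReal_mul_I_im]
  linear_combination B ^ 2 * sin_sq_add_cos_sq φ

lemma norm_sq_sq_mul_add_sq_mul_exp (h k : ℂ) (u v s : ℝ) :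
    ‖h ^ 2 * u + k ^ 2 * (v * Complex.exp (s * Complex.I))‖ ^ 2 =
      (‖h‖ ^ 2 * u) ^ 2 + (‖k‖ ^ 2 * v) ^ 2
        - 2 * (‖h‖ ^ 2 * u) * (‖k‖ ^ 2 * v) * cos (s - (π + 2 * (h.arg - k.arg))) := by
  set φ := s - (π + 2 * (h.arg - k.arg))
  set E := Complex.exp (h.arg * Complex.I)
  set F := Complex.exp (k.arg * Complex.I)
  have hφ : Complex.exp (φ * Complex.I) * E ^ 2 = -(Complex.exp (s * Complex.I) * F ^ 2) := by
    simp only [E, F, φ, ← Complex.exp_nat_mul, ← Complex.exp_add]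
    rw [← neg_one_mul, ← Complex.exp_pi_mul_I, ← Complex.exp_add,
      Complex.exp_eq_exp_iff_exists_int]
    exact ⟨-1, by push_cast; ring⟩
  have hsum : h ^ 2 * u + k ^ 2 * (v * Complex.exp (s * Complex.I)) =
      E ^ 2 * ((‖h‖ ^ 2 * u : ℝ) + (-(‖k‖ ^ 2 * v) : ℝ) * Complex.exp (φ * Complex.I)) := by
    conv_lhs => rw [← Complex.norm_mul_exp_arg_mul_I h, ← Complex.norm_mul_exp_arg_mul_I k]
    push_cast
    linear_combination (‖k‖ ^ 2 * v : ℂ) * hφ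
  rw [hsum, norm_mul, norm_pow, Complex.norm_exp_ofReal_mul_I, one_pow, one_mul,
    norm_sq_ofReal_add_mul_exp]
  ring

lemma norm_ofReal_mul_exp {v : ℝ} (hv : 0 ≤ v) (s : ℝ) :
    ‖(v : ℂ) * Complex.exp (s * Complex.I)‖ = v := by
  rw [norm_mul, Complex.norm_exp_ofReal_mul_I, mul_one, Complex.norm_of_nonneg hv]

lemma exp_mul_I_eq_of_cos_sub_eq_one {s α : ℝ} (h : cos (s - α) = 1) :
    Complex.exp (s * Complex.I) = Complex.exp (Complex.I * α) := by
  obtain ⟨n, hn⟩ := (cos_eq_one_iff _).1 h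
  rw [Complex.exp_eq_exp_iff_exists_int]
  exact ⟨n, by rw [show (s : ℂ) = α + n * (2 * π) by exact_mod_cast by linarith]; ring⟩

lemma constraint_mul_of_one_le_norm {a b : ℝ} (hb : 0 ≤ b) {g k X₁ X₂ W μ : ℂ}
    (hμ : 1 ≤ ‖μ‖) (h : a * ‖g * X₁ + k * X₂‖ ^ 2 + b ≤ ‖W‖ ^ 2) :
    a * ‖g * (μ * X₁) + k * (μ * X₂)‖ ^ 2 + b ≤ ‖μ * W‖ ^ 2 := by
  have hμ2 : 1 ≤ ‖μ‖ ^ 2 := one_le_pow₀ hμ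
  rw [show g * (μ * X₁) + k * (μ * X₂) = μ * (g * X₁ + k * X₂) by ring, norm_mul, norm_mul]
  nlinarith

lemma exp_neg_arg_mul_I_mul_self (Y : ℂ) :
    Complex.exp (-Y.arg * Complex.I) * Y = ‖Y‖ := by
  nth_rw 2 [← Complex.norm_mul_exp_arg_mul_I Y]
  rw [mul_left_comm, ← Complex.exp_add, neg_mul, neg_add_cancel, Complex.exp_zero, mul_one]

lemma exists_scale_to_boundary {c₁ c₂ : ℝ} {Y₁ Y₂ : ℂ} (hY₁ : Y₁ ≠ 0) (hY₂ : Y₂ ≠ 0)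
    (h₁ : ‖Y₁‖ ≤ c₁) (h₂ : ‖Y₂‖ ≤ c₂) :
    ∃ μ : ℂ, 1 ≤ ‖μ‖ ∧ μ * Y₁ = ‖μ * Y₁‖ ∧ ‖μ * Y₁‖ ≤ c₁ ∧ ‖μ * Y₂‖ ≤ c₂ ∧
      (‖μ * Y₁‖ = c₁ ∨ ‖μ * Y₂‖ = c₂) := by
  have hr₁ : 0 < ‖Y₁‖ := norm_pos_iff.2 hY₁
  have hr₂ : 0 < ‖Y₂‖ := norm_pos_iff.2 hY₂
  set t := min (c₁ / ‖Y₁‖) (c₂ / ‖Y₂‖)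
  have ht : 1 ≤ t := le_min ((one_le_div hr₁).2 h₁) ((one_le_div hr₂).2 h₂)
  set μ : ℂ := t * Complex.exp (-Y₁.arg * Complex.I)
  have hμ : ‖μ‖ = t := by
    rw [norm_mul, Complex.norm_of_nonneg (by positivity), ← Complex.ofReal_neg,
      Complex.norm_exp_ofReal_mul_I, mul_one]
  refine ⟨μ, hμ ▸ ht, ?_, ?_, ?_, ?_⟩
  · rw [norm_mul, hμ, mul_assoc, exp_neg_arg_mul_I_mul_self]
    push_cast; rfl
  · rw [norm_mul, hμ, ← le_div_iff₀ hr₁]; exact min_le_left _ _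
  · rw [norm_mul, hμ, ← le_div_iff₀ hr₂]; exact min_le_right _ _
  · rw [norm_mul μ, norm_mul μ, hμ]
    rcases min_choice (c₁ / ‖Y₁‖) (c₂ / ‖Y₂‖) with h | h
    · left; rw [show t = _ from h, div_mul_cancel₀ _ hr₁.ne']
    · right; rw [show t = _ from h, div_mul_cancel₀ _ hr₂.ne']

theorem exists_extremal_of_real_boundary {a₁ a₂ b₁ b₂ c₁ c₂ : ℝ} (ha₁ : 0 < a₁) (ha₂ : 0 < a₂)
    (hb₁ : 0 ≤ b₁) (hb₂ : 0 ≤ b₂) (hc₁ : 0 < c₁) (hc₂ : 0 < c₂) {h₁₁ h₁₂ h₂₁ h₂₂ : ℂ}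
    (hh₁₁ : h₁₁ ≠ 0) (hh₁₂ : h₁₂ ≠ 0) (hh₂₁ : h₂₁ ≠ 0) (hh₂₂ : h₂₂ ≠ 0) {X₁ X₂ : ℂ}
    (hX₁ : X₁ = ‖X₁‖)
    (hfeas : a₁ * ‖h₁₁ ^ 2 * X₁ + h₁₂ ^ 2 * X₂‖ ^ 2 + b₁ ≤ ‖X₂‖ ^ 2 ∧
      a₂ * ‖h₂₁ ^ 2 * X₁ + h₂₂ ^ 2 * X₂‖ ^ 2 + b₂ ≤ ‖X₁‖ ^ 2 ∧ ‖X₁‖ ≤ c₁ ∧ ‖X₂‖ ≤ c₂)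
    (hbd : ‖X₁‖ = c₁ ∨ ‖X₂‖ = c₂) :
    ∃ X₁ X₂ : ℂ,
      (a₁ * ‖h₁₁ ^ 2 * X₁ + h₁₂ ^ 2 * X₂‖ ^ 2 + b₁ ≤ ‖X₂‖ ^ 2 ∧
        a₂ * ‖h₂₁ ^ 2 * X₁ + h₂₂ ^ 2 * X₂‖ ^ 2 + b₂ ≤ ‖X₁‖ ^ 2 ∧
        ‖X₁‖ ≤ c₁ ∧ ‖X₂‖ ≤ c₂) ∧
      X₁.im = 0 ∧ 0 ≤ X₁.re ∧
      ((X₁ = 0 ∨ X₂ = 0) ∨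
        X₂ = (‖X₂‖ : ℂ)
          * Complex.exp (Complex.I * (Real.pi + 2 * (h₁₁.arg - h₁₂.arg))) ∨
        X₂ = (‖X₂‖ : ℂ)
          * Complex.exp (Complex.I * (Real.pi + 2 * (h₂₁.arg - h₂₂.arg))) ∨
        (X₁ = (c₁ : ℂ) ∧
          a₁ * ‖h₁₁ ^ 2 * X₁ + h₁₂ ^ 2 * X₂‖ ^ 2 + b₁ = ‖X₂‖ ^ 2 ∧
          a₂ * ‖h₂₁ ^ 2 * X₁ + h₂₂ ^ 2 * X₂‖ ^ 2 + b₂ = ‖X₁‖ ^ 2) ∨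
        (‖X₂‖ = c₂ ∧
          a₁ * ‖h₁₁ ^ 2 * X₁ + h₁₂ ^ 2 * X₂‖ ^ 2 + b₁ = ‖X₂‖ ^ 2 ∧
          a₂ * ‖h₂₁ ^ 2 * X₁ + h₂₂ ^ 2 * X₂‖ ^ 2 + b₂ = ‖X₁‖ ^ 2)) := by
  have hX₂ := (Complex.norm_mul_exp_arg_mul_I X₂).symm
  have hu₀ := norm_nonneg X₁
  have hv₀ := norm_nonneg X₂
  generalize ‖X₁‖ = u₀ at hX₁ hfeas hbd hu₀
  generalize ‖X₂‖ = v₀ at hX₂ hfeas hbd hv₀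
  generalize X₂.arg = s₀ at hX₂
  subst hX₁ hX₂
  obtain ⟨h₁, h₂, hu₀c, hv₀c⟩ := hfeas
  rw [norm_sq_sq_mul_add_sq_mul_exp] at h₁ h₂
  obtain ⟨u, hu, v, hv, s, ⟨f₁, f₂⟩, hext⟩ := exists_polar_extremal ha₁ ha₂ hb₁ hb₂ hc₁ hc₂
    (by positivity) (by positivity) (by positivity) (by positivity) ⟨hu₀, hu₀c⟩ ⟨hv₀, hv₀c⟩ hbd
    h₁ h₂
  refine ⟨u, v * Complex.exp (s * Complex.I), ?_, by simp, by simpa using hu.1, ?_⟩ <;>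
    simp only [norm_sq_sq_mul_add_sq_mul_exp, norm_ofReal_mul_exp hv.1,
      Complex.norm_of_nonneg hu.1]
  · exact ⟨f₁, f₂, hu.2, hv.2⟩
  rcases hext with h | h | ⟨rfl | rfl, e₁, e₂⟩
  · exact .inr (.inl (by rw [exp_mul_I_eq_of_cos_sub_eq_one h]; push_cast; rfl))
  · exact .inr (.inr (.inl (by rw [exp_mul_I_eq_of_cos_sub_eq_one h]; push_cast; rfl)))
  · exact .inr (.inr (.inr (.inl ⟨rfl, e₁, e₂⟩)))
  · exact .inr (.inr (.inr (.inr ⟨rfl, e₁, e₂⟩)))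

/-- Theorem 3 of the paper: if the feasibility problem (P1-b') has a feasible
point, then it has a feasible point with `X₁` real and nonnegative such that either one of
the pseudo-covariances vanishes, or the phase of `X₂` lies in the finite candidate set. -/
theorem stmt_12 (a₁ a₂ b₁ b₂ c₁ c₂ : ℝ) (ha₁ : 0 < a₁) (ha₂ : 0 < a₂)
    (hb₁ : 0 ≤ b₁) (hb₂ : 0 ≤ b₂) (hc₁ : 0 < c₁) (hc₂ : 0 < c₂)
    (h₁₁ h₁₂ h₂₁ h₂₂ : ℂ)
    (hh₁₁ : h₁₁ ≠ 0) (hh₁₂ : h₁₂ ≠ 0) (hh₂₁ : h₂₁ ≠ 0) (hh₂₂ : h₂₂ ≠ 0)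
    (hfeas : ∃ X₁ X₂ : ℂ,
      a₁ * ‖h₁₁ ^ 2 * X₁ + h₁₂ ^ 2 * X₂‖ ^ 2 + b₁ ≤ ‖X₂‖ ^ 2 ∧
      a₂ * ‖h₂₁ ^ 2 * X₁ + h₂₂ ^ 2 * X₂‖ ^ 2 + b₂ ≤ ‖X₁‖ ^ 2 ∧
      ‖X₁‖ ≤ c₁ ∧ ‖X₂‖ ≤ c₂) :
    ∃ X₁ X₂ : ℂ,
      (a₁ * ‖h₁₁ ^ 2 * X₁ + h₁₂ ^ 2 * X₂‖ ^ 2 + b₁ ≤ ‖X₂‖ ^ 2 ∧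
        a₂ * ‖h₂₁ ^ 2 * X₁ + h₂₂ ^ 2 * X₂‖ ^ 2 + b₂ ≤ ‖X₁‖ ^ 2 ∧
        ‖X₁‖ ≤ c₁ ∧ ‖X₂‖ ≤ c₂) ∧
      X₁.im = 0 ∧ 0 ≤ X₁.re ∧
      ((X₁ = 0 ∨ X₂ = 0) ∨
        X₂ = (‖X₂‖ : ℂ)
          * Complex.exp (Complex.I * (Real.pi + 2 * (h₁₁.arg - h₁₂.arg))) ∨
        X₂ = (‖X₂‖ : ℂ)
          * Complex.exp (Complex.I * (Real.pi + 2 * (h₂₁.arg - h₂₂.arg))) ∨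
        (X₁ = (c₁ : ℂ) ∧
          a₁ * ‖h₁₁ ^ 2 * X₁ + h₁₂ ^ 2 * X₂‖ ^ 2 + b₁ = ‖X₂‖ ^ 2 ∧
          a₂ * ‖h₂₁ ^ 2 * X₁ + h₂₂ ^ 2 * X₂‖ ^ 2 + b₂ = ‖X₁‖ ^ 2) ∨
        (‖X₂‖ = c₂ ∧
          a₁ * ‖h₁₁ ^ 2 * X₁ + h₁₂ ^ 2 * X₂‖ ^ 2 + b₁ = ‖X₂‖ ^ 2 ∧
          a₂ * ‖h₂₁ ^ 2 * X₁ + h₂₂ ^ 2 * X₂‖ ^ 2 + b₂ = ‖X₁‖ ^ 2)) := by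
  obtain ⟨Y₁, Y₂, hY₁₂, hY₂₁, hY₁c, hY₂c⟩ := hfeas
  rcases eq_or_ne Y₁ 0 with rfl | hY₁
  · exact ⟨0, Y₂, ⟨hY₁₂, hY₂₁, hY₁c, hY₂c⟩, rfl, le_rfl, .inl (.inl rfl)⟩
  have hY₂ : Y₂ ≠ 0 := by
    rintro rfl
    have : 0 < a₁ * ‖h₁₁ ^ 2 * Y₁‖ ^ 2 :=
      mul_pos ha₁ (pow_pos (norm_pos_iff.2 (mul_ne_zero (pow_ne_zero 2 hh₁₁) hY₁)) 2)
    simp only [mul_zero, add_zero, norm_zero] at hY₁₂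
    linarith
  obtain ⟨μ, hμ, hμY₁, hμc₁, hμc₂, hbd⟩ := exists_scale_to_boundary hY₁ hY₂ hY₁c hY₂c
  exact exists_extremal_of_real_boundary ha₁ ha₂ hb₁ hb₂ hc₁ hc₂ hh₁₁ hh₁₂ hh₂₁ hh₂₂ hμY₁
    ⟨constraint_mul_of_one_le_norm hb₁ hμ hY₁₂, constraint_mul_of_one_le_norm hb₂ hμ hY₂₁,
      hμc₁, hμc₂⟩ hbd
end

section
/- Let t, η, ω, d₁, d₂, d₃, d₄ be real numbers satisfying t·cos η + d₁t² + d₂ = 0 and t·cos(η + ω) + d₃t² + d₄ = 0. Define e₁ = d₃² + d₁² − 2d₁d₃ cos ω, e₂ = 2(d₁d₂ + d₃d₄) − 2(d₁d₄ + d₂d₃) cos ω − sin²ω, and e₃ = d₂² + d₄² − 2d₂d₄ cos ω. Then e₁ t⁴ + e₂ t² + e₃ = 0. -/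
/-! With `A = d₁t² + d₂` and `B = d₃t² + d₄` the hypotheses say `t cos η = -A` and
`t cos (η + ω) = -B`. Eliminating `η` through the identity
`cos² η + cos² (η + ω) - 2 cos η cos (η + ω) cos ω = sin² ω` gives
`A² + B² - 2AB cos ω = t² sin² ω`, which expands to `e₁t⁴ + e₂t² + e₃ = 0`. -/

open Real

theorem cos_sq_add_cos_add_sq_sub_mul_cos (η ω : ℝ) :
    cos η ^ 2 + cos (η + ω) ^ 2 - 2 * cos η * cos (η + ω) * cos ω = sin ω ^ 2 := by
  rw [cos_add]
  linear_combination sin ω ^ 2 * sin_sq_add_cos_sq η - cos η ^ 2 * sin_sq_add_cos_sq ω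

/-- Appendix B of the paper: the two simultaneous trigonometric equations
imply the quartic (quadratic in `t²`) polynomial equation `e₁t⁴ + e₂t² + e₃ = 0`. -/
theorem stmt_15 (t η ω d₁ d₂ d₃ d₄ : ℝ)
    (h1 : t * Real.cos η + d₁ * t ^ 2 + d₂ = 0)
    (h2 : t * Real.cos (η + ω) + d₃ * t ^ 2 + d₄ = 0)
    (e₁ e₂ e₃ : ℝ)
    (he₁ : e₁ = d₃ ^ 2 + d₁ ^ 2 - 2 * d₁ * d₃ * Real.cos ω)
    (he₂ : e₂ = 2 * (d₁ * d₂ + d₃ * d₄) - 2 * (d₁ * d₄ + d₂ * d₃) * Real.cos ω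
      - Real.sin ω ^ 2)
    (he₃ : e₃ = d₂ ^ 2 + d₄ ^ 2 - 2 * d₂ * d₄ * Real.cos ω) :
    e₁ * t ^ 4 + e₂ * t ^ 2 + e₃ = 0 := by
  subst he₁ he₂ he₃
  set A := d₁ * t ^ 2 + d₂
  set B := d₃ * t ^ 2 + d₄
  set x := t * cos η
  set y := t * cos (η + ω)
  have eliminated : A ^ 2 + B ^ 2 - 2 * A * B * cos ω = t ^ 2 * sin ω ^ 2 := by
    linear_combination t ^ 2 * cos_sq_add_cos_add_sq_sub_mul_cos η ω
      + (A - x) * h1 + (B - y) * h2 - 2 * cos ω * (A * h2 - y * h1)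
  linear_combination eliminated
end
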